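/- The operator A maps V into V; that is, if u ∈ V then Au ∈ V, i.e. Au is continuous on [ε,Λ] and w(x) ≤ Au(x) ≤ (λ/4)·√Λ for all x ∈ [ε,Λ]. -/

import Mathlib

open Real Set MeasureTheory intervalIntegral

/-- The function `w(x) = (4ε/λ)·√(ε/(Λx))`. -/
noncomputable def wfun (lam ε Λ : ℝ) (x : ℝ) : ℝ :=
  (4 * ε / lam) * Real.sqrt (ε / (Λ * x))

/-- The nonlinear integral operator `A`. -/
noncomputable def opA (lam ε Λ : ℝ) (u : ℝ → ℝ) (x : ℝ) : ℝ :=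
  (lam / 2) * ∫ y in ε..Λ, (1 / (y + x + |y - x|)) * (y * u y / (y + (u y) ^ 2))

/-- Membership in the set `V`: continuous on `[ε,Λ]` and `w(x) ≤ u(x) ≤ (λ/4)√Λ` there. -/
def memV (lam ε Λ : ℝ) (u : ℝ → ℝ) : Prop :=
  ContinuousOn u (Set.Icc ε Λ) ∧
    ∀ x ∈ Set.Icc ε Λ, wfun lam ε Λ x ≤ u x ∧ u x ≤ (lam / 4) * Real.sqrt Λ

/-!
Since `y + x + |y - x| = 2 max(x, y)`, `Au(x) = (λ/2) ∫_ε^Λ g(y) / (2 max(x, y)) dy` with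
`g(y) = y u(y) / (y + u(y)²)`; splitting at `y = x` writes this as
`(∫_ε^x g) / (2x) + ∫_x^Λ g(y) / (2y)`, which is continuous in `x`. By AM-GM `g(y) ≤ √y / 2`,
whence `Au ≤ λ(√Λ - √ε)/4`.
For the lower bound, `f(t) = y t / (y + t²)` satisfies `f(w) ≤ f(v)` whenever `w ≤ v` and
`v w ≤ y`, and `w(y)² ≤ 4 (ε/Λ) y`, so `g ≥ (1 - 4ε/Λ) w`. Integrating `(√y)⁻¹` against the kernel
and using `a/b + b/C ≤ 1 + a/C` for `a ≤ b ≤ C` reduces `w ≤ Au` to `λ (1 - 4d²)(1 - d) ≥ 2` with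
`d = √(ε/Λ)`, which is what the smallness of `ε/Λ` provides.
-/

lemma add_add_abs_sub_eq_two_mul_max (x y : ℝ) : y + x + |y - x| = 2 * max x y := by
  rcases le_total x y with h | h
  · rw [abs_of_nonneg (sub_nonneg.2 h), max_eq_right h]; ring
  · rw [abs_of_nonpos (sub_nonpos.2 h), max_eq_left h]; ring

lemma integral_inv_sqrt {a b : ℝ} (ha : 0 ≤ a) (hb : 0 ≤ b) :
    ∫ y in a..b, (√y)⁻¹ = 2 * (√b - √a) := by
  have hrpow : ∀ y ∈ uIcc a b, (√y)⁻¹ = y ^ (-(1 / 2) : ℝ) := fun y hy => by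
    rw [rpow_neg (le_min ha hb |>.trans hy.1), sqrt_eq_rpow]
  rw [integral_congr hrpow, integral_rpow (Or.inl (by norm_num)), sqrt_eq_rpow,
    sqrt_eq_rpow]
  norm_num
  ring

lemma integral_inv_sqrt_div_two_mul {a b : ℝ} (ha : 0 < a) (hb : 0 < b) :
    ∫ y in a..b, (√y)⁻¹ / (2 * y) = (√a)⁻¹ - (√b)⁻¹ := by
  have hpos : ∀ y ∈ uIcc a b, 0 < y := fun y hy => (lt_min ha hb).trans_le hy.1
  have hrpow : ∀ y ∈ uIcc a b, (√y)⁻¹ / (2 * y) = 2⁻¹ * y ^ (-(3 / 2) : ℝ) := fun y hy => by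
    have hy := hpos y hy
    rw [show (-(3 / 2) : ℝ) = -(1 / 2) + -1 by norm_num, rpow_add hy, rpow_neg_one,
      rpow_neg hy.le, ← sqrt_eq_rpow]
    field_simp
  rw [integral_congr hrpow, intervalIntegral.integral_const_mul,
    integral_rpow (Or.inr ⟨by norm_num, fun h => (hpos 0 h).false⟩),
    show (-(3 / 2) : ℝ) + 1 = -(1 / 2) by norm_num, rpow_neg ha.le, rpow_neg hb.le,
    ← sqrt_eq_rpow, ← sqrt_eq_rpow]
  ring

section MaxKernel

variable {a b : ℝ} {g : ℝ → ℝ}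

lemma continuousOn_inv_sqrt (ha : 0 < a) : ContinuousOn (fun y => (√y)⁻¹) (Icc a b) :=
  continuous_sqrt.continuousOn.inv₀ fun _ hy => (sqrt_pos.2 (ha.trans_le hy.1)).ne'

noncomputable def maxKernel (a b : ℝ) (g : ℝ → ℝ) (x : ℝ) : ℝ :=
  ∫ y in a..b, g y / (2 * max x y)

lemma maxKernel_const_mul (c : ℝ) (x : ℝ) :
    maxKernel a b (fun y => c * g y) x = c * maxKernel a b g x := by
  simp only [maxKernel, mul_div_assoc, intervalIntegral.integral_const_mul]

lemma continuousOn_div_two_mul_max (ha : 0 < a) (hg : ContinuousOn g (Icc a b)) (x : ℝ) :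
    ContinuousOn (fun y => g y / (2 * max x y)) (Icc a b) :=
  hg.div (by fun_prop) fun _ hy => by
    have : 0 < max x _ := lt_max_of_lt_right (ha.trans_le hy.1)
    positivity

lemma maxKernel_eq (ha : 0 < a) (hg : ContinuousOn g (Icc a b)) {x : ℝ} (hx : x ∈ Icc a b) :
    maxKernel a b g x = (∫ y in a..x, g y) / (2 * x) + ∫ y in x..b, g y / (2 * y) := by
  have hcont := continuousOn_div_two_mul_max ha hg x
  rw [maxKernel, ← integral_add_adjacent_intervals
    ((hcont.mono (Icc_subset_Icc le_rfl hx.2)).intervalIntegrable_of_Icc hx.1)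
    ((hcont.mono (Icc_subset_Icc hx.1 le_rfl)).intervalIntegrable_of_Icc hx.2),
    ← intervalIntegral.integral_div]
  congr 1
  · refine integral_congr fun y hy => ?_
    rw [uIcc_of_le hx.1] at hy
    simp only [max_eq_left hy.2]
  · refine integral_congr fun y hy => ?_
    rw [uIcc_of_le hx.2] at hy
    simp only [max_eq_right hy.1]

lemma continuousOn_maxKernel (ha : 0 < a) (hab : a ≤ b) (hg : ContinuousOn g (Icc a b)) :
    ContinuousOn (maxKernel a b g) (Icc a b) := by
  have hprim : ContinuousOn (fun x => ∫ y in a..x, g y) (Icc a b) := by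
    simpa only [uIcc_of_le hab] using continuousOn_primitive_interval
      (μ := volume) (hg.integrableOn_Icc.mono_set (uIcc_of_le hab).subset)
  have hprim' : ContinuousOn (fun x => ∫ y in x..b, g y / (2 * y)) (Icc a b) := by
    have hcont : ContinuousOn (fun y => g y / (2 * y)) (Icc a b) :=
      hg.div (by fun_prop) fun y hy => by have := ha.trans_le hy.1; positivity
    simpa only [uIcc_of_le hab] using continuousOn_primitive_interval_left
      (μ := volume) (hcont.integrableOn_Icc.mono_set (uIcc_of_le hab).subset)
  refine ((hprim.div (by fun_prop) fun x hx => ?_).add hprim').congr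
    fun x hx => maxKernel_eq ha hg hx
  have := ha.trans_le hx.1
  positivity

lemma maxKernel_mono {g' : ℝ → ℝ} (ha : 0 < a) (hab : a ≤ b) (hg : ContinuousOn g (Icc a b))
    (hg' : ContinuousOn g' (Icc a b)) (hle : ∀ y ∈ Icc a b, g y ≤ g' y) (x : ℝ) :
    maxKernel a b g x ≤ maxKernel a b g' x :=
  integral_mono_on hab ((continuousOn_div_two_mul_max ha hg x).intervalIntegrable_of_Icc hab)
    ((continuousOn_div_two_mul_max ha hg' x).intervalIntegrable_of_Icc hab) fun y hy =>
    div_le_div_of_nonneg_right (hle y hy) (by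
      have : 0 < max x y := lt_max_of_lt_right (ha.trans_le hy.1)
      positivity)

lemma maxKernel_inv_sqrt (ha : 0 < a) {x : ℝ} (hx : x ∈ Icc a b) :
    maxKernel a b (fun y => (√y)⁻¹) x = (√x - √a) / x + ((√x)⁻¹ - (√b)⁻¹) := by
  have hx0 := ha.trans_le hx.1
  rw [maxKernel_eq ha ?_ hx, integral_inv_sqrt ha.le hx0.le,
    integral_inv_sqrt_div_two_mul hx0 (hx0.trans_le hx.2)]
  · field_simp
  · exact continuousOn_inv_sqrt ha

lemma maxKernel_le_of_le_sqrt (ha : 0 < a) (hab : a ≤ b) (hg : ContinuousOn g (Icc a b))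
    (hgle : ∀ y ∈ Icc a b, g y ≤ √y / 2) (x : ℝ) :
    maxKernel a b g x ≤ (√b - √a) / 2 := by
  have hbound : ∀ y ∈ Icc a b, g y / (2 * max x y) ≤ 4⁻¹ * (√y)⁻¹ := fun y hy => by
    have hy : 0 < y := ha.trans_le hy.1
    calc g y / (2 * max x y) ≤ (√y / 2) / (2 * y) :=
          div_le_div₀ (by positivity) (hgle y ‹_›) (by positivity)
            (by gcongr; exact le_max_right x y)
      _ = 4⁻¹ * (√y)⁻¹ := by
        rw [← sqrt_div_self]
        ring
  have hint : IntervalIntegrable (fun y => 4⁻¹ * (√y)⁻¹) volume a b :=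
    (continuousOn_const.mul (continuousOn_inv_sqrt ha)).intervalIntegrable_of_Icc hab
  have hmono := integral_mono_on hab
    ((continuousOn_div_two_mul_max ha hg x).intervalIntegrable_of_Icc hab) hint hbound
  rw [intervalIntegral.integral_const_mul, integral_inv_sqrt ha.le (ha.le.trans hab)] at hmono
  rw [maxKernel]
  linarith

lemma le_maxKernel_of_le {κ x : ℝ} (ha : 0 < a) (hg : ContinuousOn g (Icc a b))
    (hle : ∀ y ∈ Icc a b, κ * (√y)⁻¹ ≤ g y) (hx : x ∈ Icc a b) :
    κ * ((√x - √a) / x + ((√x)⁻¹ - (√b)⁻¹)) ≤ maxKernel a b g x := by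
  rw [← maxKernel_inv_sqrt ha hx, ← maxKernel_const_mul]
  exact maxKernel_mono ha (hx.1.trans hx.2) (continuousOn_const.mul (continuousOn_inv_sqrt ha))
    hg hle x

end MaxKernel

lemma mul_div_add_sq_le_sqrt_div_two {y : ℝ} (hy : 0 < y) (t : ℝ) :
    y * t / (y + t ^ 2) ≤ √y / 2 := by
  obtain ⟨s, hs, rfl⟩ : ∃ s, 0 < s ∧ y = s ^ 2 := ⟨√y, sqrt_pos.2 hy, (sq_sqrt hy.le).symm⟩
  rw [sqrt_sq hs.le, div_le_div_iff₀ (by positivity) two_pos]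
  nlinarith [mul_nonneg hs.le (sq_nonneg (s - t))]

lemma mul_div_add_sq_le_mul_div_add_sq {y w v : ℝ} (hy : 0 < y) (hwv : w ≤ v)
    (hvw : v * w ≤ y) :
    y * w / (y + w ^ 2) ≤ y * v / (y + v ^ 2) := by
  rw [div_le_div_iff₀ (by positivity) (by positivity)]
  nlinarith [mul_nonneg (mul_nonneg hy.le (sub_nonneg.2 hwv)) (sub_nonneg.2 hvw)]

lemma one_sub_mul_le_mul_div_add_sq {y w c : ℝ} (hy : 0 < y) (hw : 0 ≤ w)
    (hc : w ^ 2 ≤ c * y) :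
    (1 - c) * w ≤ y * w / (y + w ^ 2) := by
  have hc0 : 0 ≤ c := nonneg_of_mul_nonneg_left ((sq_nonneg w).trans hc) hy
  rw [le_div_iff₀ (by positivity)]
  nlinarith [mul_le_mul_of_nonneg_left hc hw, mul_nonneg hc0 (pow_nonneg hw 3)]

lemma two_le_mul_one_sub_mul_one_sub {lam d : ℝ} (hlam : 2 < lam) (hd : 0 ≤ d)
    (hd2 : d ^ 2 ≤ min (1 / 16) (((√(lam ^ 2 + 128 * (lam - 2)) - lam) / 64) ^ 2)) :
    2 ≤ lam * (1 - 4 * d ^ 2) * (1 - d) := by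
  set R := √(lam ^ 2 + 128 * (lam - 2))
  have hR2 : R ^ 2 = lam ^ 2 + 128 * (lam - 2) := sq_sqrt (by nlinarith)
  have hlamR : lam ≤ R := le_sqrt_of_sq_le (by linarith)
  have hd16 : d ^ 2 ≤ 1 / 16 := hd2.trans (min_le_left _ _)
  have hdR : d ≤ (R - lam) / 64 := by
    nlinarith [hd2.trans (min_le_right _ _)]
  -- square `lam + 64 d ≤ R`
  have hkey : 2 + 32 * d ^ 2 ≤ lam * (1 - d) := by
    nlinarith [mul_le_mul hdR hdR hd (by linarith)]
  nlinarith [mul_le_mul_of_nonneg_right hkey (by linarith : 0 ≤ 1 - 4 * d ^ 2)]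

lemma inv_le_half_mul_of_two_le {m a b C : ℝ} (ha : 0 < a) (hab : a ≤ b) (hbC : b ≤ C)
    (h : 2 ≤ m * (1 - a / C)) :
    b⁻¹ ≤ m / 2 * ((b - a) / b ^ 2 + (b⁻¹ - C⁻¹)) := by
  have hb : 0 < b := ha.trans_le hab
  have hC : 0 < C := hb.trans_le hbC
  have hm : 0 ≤ m := by nlinarith [div_le_one_of_le₀ (hab.trans hbC) hC.le]
  set S := (b - a) / b ^ 2 + (b⁻¹ - C⁻¹)
  have hS : b * S - (1 - a / C) = (b - a) * (C - b) / (b * C) := by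
    simp only [S]
    field_simp
    ring
  have hS' : 1 - a / C ≤ b * S := by
    have : 0 ≤ (b - a) * (C - b) / (b * C) :=
      div_nonneg (mul_nonneg (by linarith) (by linarith)) (by positivity)
    linarith
  calc b⁻¹ ≤ b⁻¹ * (m / 2 * (1 - a / C)) :=
        le_mul_of_one_le_right (by positivity) (by linarith)
    _ ≤ b⁻¹ * (m / 2 * (b * S)) := by gcongr
    _ = m / 2 * S := by field_simp

lemma wfun_eq (lam : ℝ) {ε Λ : ℝ} (hε : 0 ≤ ε) (hΛ : 0 ≤ Λ) (x : ℝ) :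
    wfun lam ε Λ x = 4 * ε / lam * √(ε / Λ) * (√x)⁻¹ := by
  rw [wfun, ← div_div, sqrt_div (div_nonneg hε hΛ)]
  ring

lemma wfun_nonneg {lam ε : ℝ} (hlam : 0 ≤ lam) (hε : 0 ≤ ε) (Λ x : ℝ) :
    0 ≤ wfun lam ε Λ x := by
  rw [wfun]
  positivity

section Weight

variable {lam ε Λ y : ℝ} (hlam : 2 ≤ lam) (hε : 0 < ε) (hΛ : 0 < Λ) (hy : ε ≤ y)
include hlam hε hΛ hy

lemma wfun_sq_le : wfun lam ε Λ y ^ 2 ≤ 4 * (ε / Λ) * y := by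
  have hy0 : 0 < y := hε.trans_le hy
  have hlam0 : 0 < lam := by linarith
  rw [wfun_eq lam hε.le hΛ.le, mul_pow, mul_pow, sq_sqrt (by positivity), inv_pow,
    sq_sqrt hy0.le]
  have h : 4 * ε / lam ≤ 2 * y := by
    rw [div_le_iff₀ hlam0]
    nlinarith
  have h' : (4 * ε / lam) ^ 2 ≤ 4 * y ^ 2 := by
    nlinarith [show 0 ≤ 4 * ε / lam by positivity]
  calc (4 * ε / lam) ^ 2 * (ε / Λ) * y⁻¹ = (ε / Λ) * (4 * ε / lam) ^ 2 / y := by ring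
    _ ≤ (ε / Λ) * (4 * y ^ 2) / y := by gcongr
    _ = 4 * (ε / Λ) * y := by field_simp

lemma mul_wfun_le {v : ℝ} (hv : v ≤ lam / 4 * √Λ) : v * wfun lam ε Λ y ≤ y := by
  have hy0 : 0 < y := hε.trans_le hy
  have hεy : √ε * (√y)⁻¹ ≤ 1 := by
    rw [← div_eq_mul_inv]
    exact div_le_one_of_le₀ (sqrt_le_sqrt hy) (sqrt_nonneg y)
  calc v * wfun lam ε Λ y ≤ lam / 4 * √Λ * wfun lam ε Λ y :=
        mul_le_mul_of_nonneg_right hv (wfun_nonneg (by linarith) hε.le Λ y)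
    _ = ε * (√ε * (√y)⁻¹) := by
        rw [wfun_eq lam hε.le hΛ.le, sqrt_div' _ hΛ.le]
        field_simp
    _ ≤ y := by nlinarith

lemma one_sub_mul_wfun_le {v : ℝ} (hwv : wfun lam ε Λ y ≤ v) (hv : v ≤ lam / 4 * √Λ) :
    (1 - 4 * (ε / Λ)) * wfun lam ε Λ y ≤ y * v / (y + v ^ 2) := by
  have hy0 : 0 < y := hε.trans_le hy
  exact (one_sub_mul_le_mul_div_add_sq hy0 (wfun_nonneg (by linarith) hε.le Λ y)
    (wfun_sq_le hlam hε hΛ hy)).trans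
    (mul_div_add_sq_le_mul_div_add_sq hy0 hwv (mul_wfun_le hlam hε hΛ hy hv))

end Weight

lemma wfun_le_half_mul_maxKernel {lam ε Λ x : ℝ} {g : ℝ → ℝ} (hlam : 2 < lam) (hε : 0 < ε)
    (hεΛ : ε < Λ)
    (hratio : ε / Λ ≤ min (1 / 16) (((√(lam ^ 2 + 128 * (lam - 2)) - lam) / 64) ^ 2))
    (hg : ContinuousOn g (Icc ε Λ))
    (hle : ∀ y ∈ Icc ε Λ, (1 - 4 * (ε / Λ)) * wfun lam ε Λ y ≤ g y) (hx : x ∈ Icc ε Λ) :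
    wfun lam ε Λ x ≤ lam / 2 * maxKernel ε Λ g x := by
  have hΛ : 0 < Λ := hε.trans hεΛ
  have hx0 : 0 < x := hε.trans_le hx.1
  have hd2 : √(ε / Λ) ^ 2 = ε / Λ := sq_sqrt (by positivity)
  have hpar := two_le_mul_one_sub_mul_one_sub hlam (sqrt_nonneg _) (hd2.symm ▸ hratio)
  rw [hd2, sqrt_div' _ hΛ.le] at hpar
  have hinv :=
    inv_le_half_mul_of_two_le (sqrt_pos.2 hε) (sqrt_le_sqrt hx.1) (sqrt_le_sqrt hx.2) hpar
  rw [sq_sqrt hx0.le] at hinv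
  set K := 4 * ε / lam * √(ε / Λ)
  have hκ : ∀ y ∈ Icc ε Λ, (1 - 4 * (ε / Λ)) * K * (√y)⁻¹ ≤ g y := fun y hy => by
    rw [mul_assoc, ← wfun_eq lam hε.le hΛ.le]
    exact hle y hy
  calc wfun lam ε Λ x = K * (√x)⁻¹ := wfun_eq lam hε.le hΛ.le x
    _ ≤ K * (lam * (1 - 4 * (ε / Λ)) / 2 * ((√x - √ε) / x + ((√x)⁻¹ - (√Λ)⁻¹))) := by
      gcongr
    _ = lam / 2 * ((1 - 4 * (ε / Λ)) * K * ((√x - √ε) / x + ((√x)⁻¹ - (√Λ)⁻¹))) := by ring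
    _ ≤ lam / 2 * maxKernel ε Λ g x := by
      gcongr
      exact le_maxKernel_of_le hε hg hκ hx

lemma opA_eq_maxKernel (lam ε Λ : ℝ) (u : ℝ → ℝ) :
    opA lam ε Λ u =
      fun x => lam / 2 * maxKernel ε Λ (fun y => y * u y / (y + u y ^ 2)) x := by
  funext x
  simp only [opA, maxKernel, add_add_abs_sub_eq_two_mul_max, one_div_mul_eq_div]

theorem stmt_5 (ε Λ lam : ℝ) (hε : 0 < ε) (hεΛ : ε < Λ) (hlam : 2 < lam)
    (hratio : ε / Λ ≤ min (1 / 16)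
      (((Real.sqrt (lam ^ 2 + 128 * (lam - 2)) - lam) / 64) ^ 2))
    (u : ℝ → ℝ) (hu : memV lam ε Λ u) :
    memV lam ε Λ (opA lam ε Λ u) := by
  obtain ⟨hcont, hbound⟩ := hu
  have hΛ : 0 < Λ := hε.trans hεΛ
  have hg : ContinuousOn (fun y => y * u y / (y + u y ^ 2)) (Icc ε Λ) :=
    (continuousOn_id.mul hcont).div (continuousOn_id.add (hcont.pow 2)) fun y hy => by
      have := hε.trans_le hy.1
      positivity
  rw [opA_eq_maxKernel]
  refine ⟨continuousOn_const.mul (continuousOn_maxKernel hε hεΛ.le hg), fun x hx => ⟨?_, ?_⟩⟩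
  · exact wfun_le_half_mul_maxKernel hlam hε hεΛ hratio hg (fun y hy =>
      one_sub_mul_wfun_le hlam.le hε hΛ hy.1 (hbound y hy).1 (hbound y hy).2) hx
  · calc lam / 2 * maxKernel ε Λ _ x ≤ lam / 2 * ((√Λ - √ε) / 2) := by
          gcongr
          exact maxKernel_le_of_le_sqrt hε hεΛ.le hg
            (fun y hy => mul_div_add_sq_le_sqrt_div_two (hε.trans_le hy.1) _) x
      _ ≤ lam / 4 * √Λ := by nlinarith [sqrt_nonneg ε]
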